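/- arXiv:1212.6211 — 6 statements merged into one kernel-verified Lean document; each statement's English description precedes it below -/
import Mathlib

section
/- Let f(x) = M(1-Ax)^{-s} + (1+Bx)^{-s} where A, B, M are positive real constants and s > 0. Then for every x in [0, 1/A), f(x) ≥ M + min{1, AM/B}. -/
/-!
By Bernoulli's inequality for the exponent `-s ≤ 0`, `M (1 - A x)^(-s) ≥ M + s A M x` and
`(1 + B x)^(-s) ≥ 1 - s B x`. Since the latter power is also positive, it dominates `m (1 - s B x)`
for `m = min 1 (A M / B) ∈ (0, 1]`, and the loss `m s B x` is paid for by the gain `s A M x`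
because `m B ≤ A M`.
-/

open Real

theorem one_add_mul_le_rpow_one_add_of_nonpos {u p : ℝ} (hu : -1 < u) (hp : p ≤ 0) :
    1 + p * u ≤ (1 + u) ^ p := by
  have hpos : 0 < 1 + u := by linarith
  have hlog : log (1 + u) ≤ u := by linarith [log_le_sub_one_of_pos hpos]
  calc 1 + p * u ≤ 1 + p * log (1 + u) := by linarith [mul_le_mul_of_nonpos_left hlog hp]
    _ ≤ exp (p * log (1 + u)) := by linarith [add_one_le_exp (p * log (1 + u))]
    _ = (1 + u) ^ p := by rw [rpow_def_of_pos hpos, mul_comm]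

theorem mul_one_sub_le_rpow_neg {m s u : ℝ} (hm0 : 0 ≤ m) (hm1 : m ≤ 1) (hs : 0 ≤ s)
    (hu : -1 < u) : m * (1 - s * u) ≤ (1 + u) ^ (-s) := by
  have hbern : 1 - s * u ≤ (1 + u) ^ (-s) := by
    simpa [sub_eq_add_neg] using one_add_mul_le_rpow_one_add_of_nonpos hu (neg_nonpos.2 hs)
  have hpos : 0 < (1 + u) ^ (-s) := rpow_pos_of_pos (by linarith) _
  rcases le_total 0 (1 - s * u) with h | h <;> nlinarith

theorem stmt_0 (A B M s x : ℝ) (hA : 0 < A) (hB : 0 < B) (hM : 0 < M) (hs : 0 < s)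
    (hx0 : 0 ≤ x) (hx1 : x < 1 / A) :
    M + min 1 (A * M / B) ≤ M * (1 - A * x) ^ (-s) + (1 + B * x) ^ (-s) := by
  set m := min 1 (A * M / B)
  have hAx : A * x < 1 := by rwa [lt_div_iff₀ hA, mul_comm] at hx1
  have hm0 : 0 ≤ m := le_min zero_le_one (by positivity)
  have hmB : m * B ≤ A * M := (le_div_iff₀ hB).1 (min_le_right _ _)
  have hfirst : M * (1 + s * (A * x)) ≤ M * (1 - A * x) ^ (-s) := by
    have h := one_add_mul_le_rpow_one_add_of_nonpos (u := -(A * x)) (by linarith)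
      (neg_nonpos.2 hs.le)
    rw [← sub_eq_add_neg, neg_mul_neg] at h
    exact mul_le_mul_of_nonneg_left h hM.le
  have hsecond : m * (1 - s * (B * x)) ≤ (1 + B * x) ^ (-s) :=
    mul_one_sub_le_rpow_neg hm0 (min_le_left _ _) hs.le (by nlinarith)
  have htrade : m * (s * (B * x)) ≤ M * (s * (A * x)) := by
    nlinarith [mul_le_mul_of_nonneg_right hmB (mul_nonneg hs.le hx0)]
  linarith
end

section
/- For any compact infinite metric space (A, ρ) and any N ≥ 2, there exists an N-point best-packing configuration ω_N on A such that the mesh norm η(ω_N, A) is at most the separation distance δ(ω_N); equivalently γ(ω_N, A) ≤ 1. -/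
/-!
Among best-packing configurations choose one with the fewest pairs at minimal distance `δ`.
If some point `y` were at distance more than `δ` from every point of the configuration, moving
one endpoint of a minimal pair to `y` would not decrease the separation, hence would give another
best-packing configuration, with strictly fewer minimal pairs. So every point lies within `δ` of
the configuration, i.e. `η ≤ δ`.
-/

open scoped BigOperators
open Filter Metric

/-- Separation distance of an `N`-point configuration. -/
noncomputable def sep {E : Type*} [MetricSpace E] {N : ℕ} (x : Fin N → E) : ℝ :=
  ⨅ p : {p : Fin N × Fin N // p.1 ≠ p.2}, dist (x p.1.1) (x p.1.2)

/-- Mesh norm (covering radius) of a configuration relative to a set `S`. -/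
noncomputable def mesh {E : Type*} [MetricSpace E] {N : ℕ} (S : Set E) (x : Fin N → E) : ℝ :=
  ⨆ y : S, ⨅ i, dist (y : E) (x i)

/-- `N`-point best-packing distance of the set `S`. -/
noncomputable def packDist {E : Type*} [MetricSpace E] (S : Set E) (N : ℕ) : ℝ :=
  ⨆ x : {x : Fin N → E // Function.Injective x ∧ ∀ i, x i ∈ S}, sep x.1

/-- Riesz `s`-energy of a configuration. -/
noncomputable def energy {E : Type*} [MetricSpace E] {N : ℕ} (s : ℝ) (x : Fin N → E) : ℝ :=
  ∑ i, ∑ j ∈ Finset.univ.filter (· ≠ i), dist (x i) (x j) ^ (-s)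

/-- Minimal `N`-point Riesz `s`-energy of the set `S`. -/
noncomputable def minEnergy {E : Type*} [MetricSpace E] (S : Set E) (N : ℕ) (s : ℝ) : ℝ :=
  ⨅ x : {x : Fin N → E // Function.Injective x ∧ ∀ i, x i ∈ S}, energy s x.1

namespace Packing

open Function

variable {E : Type*} [MetricSpace E] {N : ℕ}

lemma nonempty_offDiag (hN : 2 ≤ N) : Nonempty {p : Fin N × Fin N // p.1 ≠ p.2} :=
  ⟨⟨(⟨0, by omega⟩, ⟨1, by omega⟩), by simp [Fin.ext_iff]⟩⟩

lemma sep_le_dist (x : Fin N → E) {i j : Fin N} (h : i ≠ j) : sep x ≤ dist (x i) (x j) :=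
  ciInf_le (Finite.bddBelow_range _) (⟨(i, j), h⟩ : {p : Fin N × Fin N // p.1 ≠ p.2})

lemma le_sep (hN : 2 ≤ N) {x : Fin N → E} {c : ℝ} (h : ∀ i j, i ≠ j → c ≤ dist (x i) (x j)) :
    c ≤ sep x :=
  have := nonempty_offDiag hN
  le_ciInf fun p => h _ _ p.2

lemma exists_dist_eq_sep (hN : 2 ≤ N) (x : Fin N → E) :
    ∃ i j, i ≠ j ∧ dist (x i) (x j) = sep x := by
  have := nonempty_offDiag hN
  obtain ⟨p, hp⟩ := exists_eq_ciInf_of_finite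
    (f := fun p : {p : Fin N × Fin N // p.1 ≠ p.2} => dist (x p.1.1) (x p.1.2))
  exact ⟨_, _, p.2, hp⟩

lemma injective_of_sep_pos {x : Fin N → E} (h : 0 < sep x) : Injective x := by
  intro i j hij
  by_contra hne
  have := sep_le_dist x hne
  rw [hij, dist_self] at this
  linarith

lemma sep_pos_iff (hN : 2 ≤ N) {x : Fin N → E} : 0 < sep x ↔ Injective x := by
  refine ⟨injective_of_sep_pos, fun hx => ?_⟩
  obtain ⟨i, j, hij, h⟩ := exists_dist_eq_sep hN x
  exact h ▸ dist_pos.2 (hx.ne hij)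

lemma continuous_sep (hN : 2 ≤ N) : Continuous (sep : (Fin N → E) → ℝ) := by
  have := nonempty_offDiag hN
  have hsep : (sep : (Fin N → E) → ℝ) = fun x => Finset.univ.inf' Finset.univ_nonempty
      fun p : {p : Fin N × Fin N // p.1 ≠ p.2} => dist (x p.1.1) (x p.1.2) :=
    funext fun x => (Finset.inf'_univ_eq_ciInf _).symm
  rw [hsep]
  exact Continuous.finset_inf'_apply _ fun p _ =>
    (continuous_apply p.1.1).dist (continuous_apply p.1.2)

lemma sep_le_packDist {S : Set E} (hS : Bornology.IsBounded S) (hN : 2 ≤ N) {x : Fin N → E}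
    (hx : Injective x) (hxS : ∀ i, x i ∈ S) : sep x ≤ packDist S N := by
  refine le_ciSup (f := fun z : {x : Fin N → E // Injective x ∧ ∀ i, x i ∈ S} => sep z.1)
    ⟨diam S, ?_⟩ ⟨x, hx, hxS⟩
  rintro _ ⟨⟨z, -, hzS⟩, rfl⟩
  have h01 : (⟨0, by omega⟩ : Fin N) ≠ ⟨1, by omega⟩ := by simp
  exact (sep_le_dist z h01).trans (dist_le_diam_of_mem hS (hzS _) (hzS _))

lemma mesh_le {S : Set E} {x : Fin N → E} {c : ℝ} (hc : 0 ≤ c)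
    (h : ∀ y ∈ S, ∃ i, dist y (x i) ≤ c) : mesh S x ≤ c :=
  Real.iSup_le (fun y => (h y y.2).elim fun i hi =>
    (ciInf_le (Finite.bddBelow_range _) i).trans hi) hc

def IsBestPacking (x : Fin N → E) : Prop :=
  Injective x ∧ sep x = packDist (Set.univ : Set E) N

lemma exists_isBestPacking [CompactSpace E] [Infinite E] (hN : 2 ≤ N) :
    ∃ x : Fin N → E, IsBestPacking x := by
  obtain ⟨xm, -, hmax⟩ :=
    isCompact_univ.exists_isMaxOn Set.univ_nonempty (continuous_sep (E := E) hN).continuousOn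
  have hx₀ : Injective ((Fin.valEmbedding (n := N)).trans (Infinite.natEmbedding E)) :=
    Embedding.injective _
  have hinj : Injective xm :=
    (sep_pos_iff hN).1 (((sep_pos_iff hN).2 hx₀).trans_le (hmax (Set.mem_univ _)))
  have : Nonempty {x : Fin N → E // Injective x ∧ ∀ i, x i ∈ Set.univ} :=
    ⟨⟨xm, hinj, fun _ => trivial⟩⟩
  exact ⟨xm, hinj,
    le_antisymm (sep_le_packDist (Bornology.IsBounded.all _) hN hinj fun _ => trivial)
      (ciSup_le fun z => hmax (Set.mem_univ z.1))⟩

open Classical in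
noncomputable def minPairs (x : Fin N → E) : Finset (Fin N × Fin N) :=
  {p | p.1 ≠ p.2 ∧ dist (x p.1) (x p.2) = sep x}

lemma mem_minPairs {x : Fin N → E} {p : Fin N × Fin N} :
    p ∈ minPairs x ↔ p.1 ≠ p.2 ∧ dist (x p.1) (x p.2) = sep x := by
  simp [minPairs]

lemma sep_le_sep_update (hN : 2 ≤ N) {x : Fin N → E} {j : Fin N} {y : E}
    (hy : ∀ i ≠ j, sep x ≤ dist y (x i)) : sep x ≤ sep (update x j y) := by
  refine le_sep hN fun a b hab => ?_
  rcases eq_or_ne a j with rfl | ha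
  · simpa [hab.symm] using hy b hab.symm
  rcases eq_or_ne b j with rfl | hb
  · simpa [ha, dist_comm] using hy a ha
  · simpa [ha, hb] using sep_le_dist x hab

lemma minPairs_update_ssubset {x : Fin N → E} {j k : Fin N} {y : E}
    (hy : ∀ i ≠ j, sep x < dist y (x i)) (hsep : sep (update x j y) = sep x)
    (hjk : (j, k) ∈ minPairs x) : minPairs (update x j y) ⊂ minPairs x := by
  have hfar : ∀ p ∈ minPairs (update x j y), p.1 ≠ j ∧ p.2 ≠ j := by
    rintro ⟨a, b⟩ hp
    rw [mem_minPairs, hsep] at hp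
    obtain ⟨hab, hd⟩ := hp
    constructor
    · rintro rfl
      simp only [update_self, update_of_ne hab.symm] at hd
      exact (hy b hab.symm).ne' hd
    · rintro rfl
      simp only [update_self, update_of_ne hab, dist_comm] at hd
      exact (hy a hab).ne' hd
  refine (Finset.ssubset_iff_of_subset fun p hp => ?_).2
    ⟨(j, k), hjk, fun h => (hfar _ h).1 rfl⟩
  obtain ⟨h1, h2⟩ := hfar p hp
  rw [mem_minPairs, hsep, update_of_ne h1, update_of_ne h2] at hp
  exact mem_minPairs.2 hp

lemma exists_isBestPacking_card_minPairs_lt [BoundedSpace E] (hN : 2 ≤ N) {x : Fin N → E}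
    (hx : IsBestPacking x) {y : E} (hy : ∀ i, sep x < dist y (x i)) :
    ∃ x' : Fin N → E, IsBestPacking x' ∧ (minPairs x').card < (minPairs x).card := by
  obtain ⟨j, k, hjk, hd⟩ := exists_dist_eq_sep hN x
  have hle : sep x ≤ sep (update x j y) := sep_le_sep_update hN fun i _ => (hy i).le
  have hinj : Injective (update x j y) :=
    injective_of_sep_pos (((sep_pos_iff hN).2 hx.1).trans_le hle)
  have hsep : sep (update x j y) = sep x :=
    le_antisymm (hx.2 ▸ sep_le_packDist (Bornology.IsBounded.all _) hN hinj fun _ => trivial) hle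
  exact ⟨_, ⟨hinj, hsep.trans hx.2⟩,
    Finset.card_lt_card <|
      minPairs_update_ssubset (fun i _ => hy i) hsep (mem_minPairs.2 ⟨hjk, hd⟩)⟩

lemma exists_isBestPacking_forall_exists_dist_le_sep [CompactSpace E] [Infinite E]
    (hN : 2 ≤ N) :
    ∃ x : Fin N → E, IsBestPacking x ∧ ∀ y, ∃ i, dist y (x i) ≤ sep x := by
  obtain ⟨x, hx⟩ := exists_isBestPacking (E := E) hN
  induction h : (minPairs x).card using Nat.strong_induction_on generalizing x with
  | _ n ih =>
    by_cases hcov : ∀ y, ∃ i, dist y (x i) ≤ sep x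
    · exact ⟨x, hx, hcov⟩
    push Not at hcov
    obtain ⟨y, hy⟩ := hcov
    obtain ⟨x', hx', hlt⟩ := exists_isBestPacking_card_minPairs_lt hN hx hy
    exact ih _ (h ▸ hlt) x' hx' rfl

end Packing

open Packing in
theorem stmt_1 {A : Type*} [MetricSpace A] [CompactSpace A] [Infinite A] (N : ℕ) (hN : 2 ≤ N) :
    ∃ x : Fin N → A, Function.Injective x ∧ sep x = packDist (Set.univ : Set A) N ∧
      mesh (Set.univ : Set A) x ≤ sep x ∧ mesh (Set.univ : Set A) x / sep x ≤ 1 := by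
  obtain ⟨x, ⟨hinj, hpack⟩, hcover⟩ :=
    exists_isBestPacking_forall_exists_dist_le_sep (E := A) hN
  have hpos : 0 < sep x := (sep_pos_iff hN).2 hinj
  have hmesh : mesh Set.univ x ≤ sep x := mesh_le hpos.le fun y _ => hcover y
  exact ⟨x, hinj, hpack, hmesh, (div_le_one hpos).2 hmesh⟩
end

section
/- Let (A, ρ) be a compact infinite metric space and β ∈ (0,1) such that for every x ∈ A and every r ∈ (0, diam(A)], the annulus B(x, r) \ B(x, βr) is nonempty. Then for every N-point configuration ω_N ⊂ A with N ≥ 2, γ(ω_N, A) ≥ β/2. -/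
/-!
Let `δ` be the separation of the configuration and `r = δ / (1 + β)`. The annulus condition
at one of the points `x i₀` gives `y` with `β r < ρ(y, x i₀) ≤ r`; every other point is at
distance at least `δ - r = β r` from `y` by the triangle inequality. Hence the covering radius is
at least `β δ / (1 + β) ≥ β δ / 2`.
-/

open scoped BigOperators
open Filter Metric

section Configuration

variable {E : Type*} [MetricSpace E] {N : ℕ}

theorem sep_le_dist (x : Fin N → E) {i j : Fin N} (hij : i ≠ j) :
    sep x ≤ dist (x i) (x j) :=
  ciInf_le (f := fun p : {p : Fin N × Fin N // p.1 ≠ p.2} ↦ dist (x p.1.1) (x p.1.2))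
    ⟨0, by rintro _ ⟨p, rfl⟩; exact dist_nonneg⟩ ⟨(i, j), hij⟩

theorem exists_sep_eq_dist (hN : 2 ≤ N) (x : Fin N → E) :
    ∃ i j : Fin N, i ≠ j ∧ sep x = dist (x i) (x j) := by
  have : Nonempty {p : Fin N × Fin N // p.1 ≠ p.2} :=
    ⟨⟨(⟨0, by omega⟩, ⟨1, by omega⟩), by simp [Fin.ext_iff]⟩⟩
  obtain ⟨p, hp⟩ := Finite.exists_min fun p : {p : Fin N × Fin N // p.1 ≠ p.2} ↦
    dist (x p.1.1) (x p.1.2)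
  exact ⟨p.1.1, p.1.2, p.2, le_antisymm (sep_le_dist x p.2) (le_ciInf hp)⟩

theorem sep_pos (hN : 2 ≤ N) {x : Fin N → E} (hx : Function.Injective x) : 0 < sep x := by
  obtain ⟨i, j, hij, hsep⟩ := exists_sep_eq_dist hN x
  exact hsep ▸ dist_pos.2 (hx.ne hij)

theorem sep_le_diam_univ [BoundedSpace E] (hN : 2 ≤ N) (x : Fin N → E) :
    sep x ≤ diam (Set.univ : Set E) := by
  obtain ⟨i, j, -, hsep⟩ := exists_sep_eq_dist hN x
  exact hsep ▸ dist_le_diam_of_mem (Bornology.IsBounded.all _) trivial trivial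

theorem iInf_dist_le_mesh_univ [BoundedSpace E] [Nonempty (Fin N)] (x : Fin N → E) (y : E) :
    ⨅ i, dist y (x i) ≤ mesh Set.univ x := by
  have hbdd : BddAbove (Set.range fun z : (Set.univ : Set E) ↦ ⨅ i, dist (z : E) (x i)) := by
    refine ⟨diam (Set.univ : Set E), ?_⟩
    rintro _ ⟨z, rfl⟩
    obtain ⟨i⟩ := ‹Nonempty (Fin N)›
    exact (ciInf_le ⟨0, by rintro _ ⟨j, rfl⟩; exact dist_nonneg⟩ i).trans
      (dist_le_diam_of_mem (Bornology.IsBounded.all _) trivial trivial)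
  exact le_ciSup hbdd ⟨y, trivial⟩

theorem le_iInf_dist_of_mem_annulus [Nonempty (Fin N)] (x : Fin N → E) {i₀ : Fin N} {y : E}
    {a b : ℝ} (hy_le : dist y (x i₀) ≤ b) (hy_ge : a ≤ dist y (x i₀)) (hab : a + b ≤ sep x) :
    a ≤ ⨅ i, dist y (x i) := by
  refine le_ciInf fun i ↦ ?_
  rcases eq_or_ne i i₀ with rfl | hi
  · exact hy_ge
  · have hsep := sep_le_dist x hi
    have htri := dist_triangle_left (x i) (x i₀) y
    linarith

end Configuration

theorem stmt_3_general {A : Type*} [MetricSpace A] [CompactSpace A]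
    (β : ℝ) (hβ : β ∈ Set.Ioo (0 : ℝ) 1)
    (hann : ∀ x : A, ∀ r : ℝ, 0 < r → r ≤ Metric.diam (Set.univ : Set A) →
      ∃ y : A, dist y x ≤ r ∧ β * r < dist y x)
    (N : ℕ) (hN : 2 ≤ N) (x : Fin N → A) (hx : Function.Injective x) :
    β / 2 ≤ mesh (Set.univ : Set A) x / sep x := by
  obtain ⟨hβ0, hβ1⟩ := hβ
  have : Nonempty (Fin N) := ⟨⟨0, by omega⟩⟩
  set δ := sep x
  have hδ : 0 < δ := sep_pos hN hx
  set r := δ / (1 + β)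
  have hr : 0 < r := by positivity
  have hδr : β * r + r = δ := by simp only [r]; field_simp; ring
  have hr_le : r ≤ diam (Set.univ : Set A) :=
    (div_le_self hδ.le (by linarith)).trans (sep_le_diam_univ hN x)
  obtain ⟨y, hy_le, hy_gt⟩ := hann (x ⟨0, by omega⟩) r hr hr_le
  have hmesh : β * r ≤ mesh Set.univ x :=
    (le_iInf_dist_of_mem_annulus x hy_le hy_gt.le hδr.le).trans (iInf_dist_le_mesh_univ x y)
  have hr_ge : δ / 2 ≤ r := div_le_div_of_nonneg_left hδ.le (by positivity) (by linarith)
  rw [le_div_iff₀ hδ]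
  calc β / 2 * δ = β * (δ / 2) := by ring
    _ ≤ β * r := by gcongr
    _ ≤ mesh Set.univ x := hmesh

theorem stmt_3 {A : Type*} [MetricSpace A] [CompactSpace A] [Infinite A]
    (β : ℝ) (hβ : β ∈ Set.Ioo (0 : ℝ) 1)
    (hann : ∀ x : A, ∀ r : ℝ, 0 < r → r ≤ Metric.diam (Set.univ : Set A) →
      ∃ y : A, dist y x ≤ r ∧ β * r < dist y x)
    (N : ℕ) (hN : 2 ≤ N) (x : Fin N → A) (hx : Function.Injective x) :
    β / 2 ≤ mesh (Set.univ : Set A) x / sep x :=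
  stmt_3_general β hβ hann N hN x hx
end

section
/- For a fixed N ≥ 2, let ω_N be a cluster point as s → ∞ of a family of N-point s-energy minimizing configurations on a compact infinite metric space (A, ρ). Then γ(ω_N, A) ≤ 1, i.e., the mesh norm of ω_N does not exceed its separation distance. -/
open scoped BigOperators
open Filter Metric

/-! If some point `y` were farther than `sep x` from every point of `x`, pick `a < b` strictly
between `sep x` and that distance. For large `n` the minimizer `xk n` has two points closer than
`a` while `y` is farther than `b` from all of its points, so moving one of the two close points
to `y` removes a term larger than `a ^ (-s)` from its row of the energy and creates a row of at
most `(N - 1) * b ^ (-s)`; once `(b / a) ^ s ≥ N - 1` this strictly lowers the energy. -/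

open Function Finset

lemma injective_update_of_notMem_range {α β : Type*} [DecidableEq α] {z : α → β}
    (hz : Injective z) {y : β} (hy : y ∉ Set.range z) (i : α) : Injective (update z i y) := by
  have hne (k : α) (hk : k ≠ i) : update z i y k ≠ y := by
    rw [update_of_ne hk]; exact fun h => hy ⟨k, h⟩
  intro j k h
  by_cases hj : j = i <;> by_cases hk : k = i
  · rw [hj, hk]
  · subst hj; exact absurd (h.symm.trans (update_self _ _ _)) (hne k hk)
  · subst hk; exact absurd (h.trans (update_self _ _ _)) (hne j hj)
  · exact hz (by rwa [update_of_ne hj, update_of_ne hk] at h)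

lemma eventually_mul_rpow_neg_le (c : ℝ) {a b : ℝ} (ha : 0 < a) (hab : a < b) :
    ∀ᶠ s : ℝ in atTop, c * b ^ (-s) ≤ a ^ (-s) := by
  have hb : 0 < b := ha.trans hab
  have hgrow := (tendsto_rpow_atTop_of_base_gt_one _ ((one_lt_div ha).2 hab)).eventually_ge_atTop c
  filter_upwards [hgrow] with s hs
  calc c * b ^ (-s) ≤ (b / a) ^ s * b ^ (-s) :=
        mul_le_mul_of_nonneg_right hs (Real.rpow_nonneg hb.le _)
    _ = a ^ (-s) := by
      rw [Real.div_rpow hb.le ha.le, Real.rpow_neg ha.le, Real.rpow_neg hb.le]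
      field_simp

section Energy

variable {E : Type*} [MetricSpace E] {N : ℕ}

noncomputable def rowEnergy (s : ℝ) (z : Fin N → E) (i : Fin N) : ℝ :=
  ∑ j ∈ univ.erase i, dist (z i) (z j) ^ (-s)

lemma energy_eq_two_mul_rowEnergy_add (s : ℝ) (z : Fin N → E) (i : Fin N) :
    energy s z = 2 * rowEnergy s z i +
      ∑ k ∈ univ.erase i, ∑ j ∈ (univ.erase k).erase i, dist (z k) (z j) ^ (-s) := by
  have hrow (k : Fin N) (hk : k ∈ univ.erase i) :
      ∑ j ∈ univ.erase k, dist (z k) (z j) ^ (-s) =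
        dist (z i) (z k) ^ (-s) + ∑ j ∈ (univ.erase k).erase i, dist (z k) (z j) ^ (-s) := by
    rw [dist_comm, ← add_sum_erase _ _ (mem_erase.2 ⟨(ne_of_mem_erase hk).symm, mem_univ i⟩)]
  simp only [energy, filter_ne']
  rw [← add_sum_erase _ _ (mem_univ i), sum_congr rfl hrow, sum_add_distrib, rowEnergy]
  ring

lemma energy_update_lt_of_rowEnergy_lt {s : ℝ} {z : Fin N → E} {i : Fin N} {y : E}
    (h : rowEnergy s (update z i y) i < rowEnergy s z i) :
    energy s (update z i y) < energy s z := by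
  rw [energy_eq_two_mul_rowEnergy_add s _ i, energy_eq_two_mul_rowEnergy_add s z i]
  have hrest : ∑ k ∈ univ.erase i, ∑ j ∈ (univ.erase k).erase i,
      dist (update z i y k) (update z i y j) ^ (-s) =
      ∑ k ∈ univ.erase i, ∑ j ∈ (univ.erase k).erase i, dist (z k) (z j) ^ (-s) :=
    sum_congr rfl fun k hk => sum_congr rfl fun j hj => by
      rw [update_of_ne (ne_of_mem_erase hk), update_of_ne (ne_of_mem_erase hj)]
  linarith

lemma rowEnergy_le_of_le_dist {s b : ℝ} {z : Fin N → E} {i : Fin N} (hs : 0 ≤ s) (hb : 0 < b)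
    (h : ∀ j ≠ i, b ≤ dist (z i) (z j)) :
    rowEnergy s z i ≤ (N - 1) * b ^ (-s) := by
  have hterm (j : Fin N) (hj : j ∈ univ.erase i) : dist (z i) (z j) ^ (-s) ≤ b ^ (-s) :=
    Real.rpow_le_rpow_of_nonpos hb (h j (ne_of_mem_erase hj)) (neg_nonpos.2 hs)
  calc rowEnergy s z i ≤ (univ.erase i).card • b ^ (-s) := sum_le_card_nsmul _ _ _ hterm
    _ = (N - 1) * b ^ (-s) := by
      rw [card_erase_of_mem (mem_univ i), card_univ, Fintype.card_fin, nsmul_eq_mul,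
        Nat.cast_pred (Fin.pos i)]

lemma rpow_neg_lt_rowEnergy {s a : ℝ} {z : Fin N → E} {i j : Fin N} (hs : 0 < s) (hij : j ≠ i)
    (hpos : 0 < dist (z i) (z j)) (hlt : dist (z i) (z j) < a) :
    a ^ (-s) < rowEnergy s z i :=
  calc a ^ (-s) < dist (z i) (z j) ^ (-s) := Real.rpow_lt_rpow_of_neg hpos hlt (neg_lt_zero.2 hs)
    _ ≤ rowEnergy s z i :=
      single_le_sum (fun _ _ => Real.rpow_nonneg dist_nonneg _) (mem_erase.2 ⟨hij, mem_univ j⟩)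

lemma minEnergy_le_energy (s : ℝ) {z : Fin N → E} (hz : Injective z) :
    minEnergy (Set.univ : Set E) N s ≤ energy s z := by
  refine ciInf_le ⟨0, ?_⟩ (⟨z, hz, fun _ => Set.mem_univ _⟩ :
    {x : Fin N → E // Injective x ∧ ∀ i, x i ∈ Set.univ})
  rintro _ ⟨w, rfl⟩
  exact sum_nonneg fun _ _ => sum_nonneg fun _ _ => Real.rpow_nonneg dist_nonneg _

lemma minEnergy_lt_energy_of_far_point {s a b : ℝ} {z : Fin N → E} {i j : Fin N} {y : E}
    (hs : 0 < s) (hb : 0 < b) (hz : Injective z) (hij : i ≠ j) (hclose : dist (z i) (z j) < a)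
    (hfar : ∀ k, b < dist y (z k)) (hba : (N - 1) * b ^ (-s) ≤ a ^ (-s)) :
    minEnergy (Set.univ : Set E) N s < energy s z := by
  have hy : y ∉ Set.range z := by
    rintro ⟨k, rfl⟩
    exact (hb.trans (hfar k)).ne' (dist_self _)
  have hrow : rowEnergy s (update z i y) i < rowEnergy s z i :=
    calc rowEnergy s (update z i y) i ≤ (N - 1) * b ^ (-s) :=
          rowEnergy_le_of_le_dist hs.le hb fun k hk => by
            rw [update_self, update_of_ne hk]; exact (hfar k).le
      _ ≤ a ^ (-s) := hba
      _ < rowEnergy s z i :=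
          rpow_neg_lt_rowEnergy hs hij.symm (dist_pos.2 (hz.ne hij)) hclose
  exact (minEnergy_le_energy s (injective_update_of_notMem_range hz hy i)).trans_lt
    (energy_update_lt_of_rowEnergy_lt hrow)

lemma sep_nonneg (x : Fin N → E) : 0 ≤ sep x :=
  Real.iInf_nonneg fun _ => dist_nonneg

lemma exists_dist_eq_sep (hN : 2 ≤ N) (x : Fin N → E) :
    ∃ i j, i ≠ j ∧ dist (x i) (x j) = sep x := by
  have : Nonempty {p : Fin N × Fin N // p.1 ≠ p.2} :=
    ⟨⟨(⟨0, by omega⟩, ⟨1, by omega⟩), by simp [Fin.ext_iff]⟩⟩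
  obtain ⟨⟨⟨i, j⟩, hij⟩, h⟩ := exists_eq_ciInf_of_finite
    (f := fun p : {p : Fin N × Fin N // p.1 ≠ p.2} => dist (x p.1.1) (x p.1.2))
  exact ⟨i, j, hij, h⟩

lemma iInf_dist_le_sep_of_tendsto_minimizers (hN : 2 ≤ N) {x : Fin N → E} {sk : ℕ → ℝ}
    {xk : ℕ → Fin N → E} (hs : Tendsto sk atTop atTop) (hinj : ∀ n, Injective (xk n))
    (hmin : ∀ n, energy (sk n) (xk n) = minEnergy (Set.univ : Set E) N (sk n))
    (hx : Tendsto xk atTop (nhds x)) (y : E) :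
    ⨅ k, dist y (x k) ≤ sep x := by
  by_contra! hlt
  obtain ⟨i, j, hij, hsep⟩ := exists_dist_eq_sep hN x
  set m := ⨅ k, dist y (x k)
  have hm (k : Fin N) : m ≤ dist y (x k) := ciInf_le (Set.finite_range _).bddBelow k
  obtain ⟨a, hsep_a, ham⟩ := exists_between hlt
  obtain ⟨b, hab, hbm⟩ := exists_between ham
  have ha : 0 < a := (sep_nonneg x).trans_lt hsep_a
  have hpt := tendsto_pi_nhds.1 hx
  have hclose : ∀ᶠ n in atTop, dist (xk n i) (xk n j) < a :=
    ((hpt i).dist (hpt j)).eventually_lt_const (hsep ▸ hsep_a)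
  have hfar : ∀ᶠ n in atTop, ∀ k, b < dist y (xk n k) := eventually_all.2 fun k =>
    (tendsto_const_nhds.dist (hpt k)).eventually_const_lt (hbm.trans_le (hm k))
  have hlarge := hs.eventually (eventually_mul_rpow_neg_le (N - 1) ha hab)
  obtain ⟨n, hclose, hfar, hlarge, hpos⟩ :=
    (hclose.and (hfar.and (hlarge.and (hs.eventually_gt_atTop 0)))).exists
  exact (minEnergy_lt_energy_of_far_point hpos (ha.trans hab) (hinj n) hij hclose hfar
    hlarge).ne' (hmin n)

end Energy

theorem stmt_5_general {A : Type*} [MetricSpace A]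
    (N : ℕ) (hN : 2 ≤ N) (x : Fin N → A)
    (hcluster : ∃ (sk : ℕ → ℝ) (xk : ℕ → Fin N → A),
      Filter.Tendsto sk Filter.atTop Filter.atTop ∧
      (∀ n, Function.Injective (xk n)) ∧
      (∀ n, energy (sk n) (xk n) = minEnergy (Set.univ : Set A) N (sk n)) ∧
      Filter.Tendsto xk Filter.atTop (nhds x)) :
    mesh (Set.univ : Set A) x ≤ sep x ∧ mesh (Set.univ : Set A) x / sep x ≤ 1 := by
  obtain ⟨sk, xk, hs, hinj, hmin, hx⟩ := hcluster
  have : Nonempty (Set.univ : Set A) := ⟨⟨x ⟨0, by omega⟩, trivial⟩⟩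
  have hmesh : mesh Set.univ x ≤ sep x :=
    ciSup_le fun y => iInf_dist_le_sep_of_tendsto_minimizers hN hs hinj hmin hx y
  exact ⟨hmesh, div_le_one_of_le₀ hmesh (sep_nonneg x)⟩

theorem stmt_5 {A : Type*} [MetricSpace A] [CompactSpace A] [Infinite A]
    (N : ℕ) (hN : 2 ≤ N) (x : Fin N → A)
    (hcluster : ∃ (sk : ℕ → ℝ) (xk : ℕ → Fin N → A),
      Filter.Tendsto sk Filter.atTop Filter.atTop ∧
      (∀ n, Function.Injective (xk n)) ∧
      (∀ n, energy (sk n) (xk n) = minEnergy (Set.univ : Set A) N (sk n)) ∧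
      Filter.Tendsto xk Filter.atTop (nhds x)) :
    mesh (Set.univ : Set A) x ≤ sep x ∧ mesh (Set.univ : Set A) x / sep x ≤ 1 :=
  stmt_5_general N hN x hcluster
end

section
/- The configuration Q = {(1,0,0), (-1,0,0), (0,1,0), (0,0,1), (0,0,-1)} ⊂ S² has separation distance δ(Q) = √2 and mesh norm η(Q, S²) = √2, hence mesh-separation ratio γ(Q, S²) = 1. -/
open scoped BigOperators
open Filter Metric

noncomputable def pt (a b c : ℝ) : EuclideanSpace ℝ (Fin 3) :=
  (EuclideanSpace.equiv (Fin 3) ℝ).symm ![a, b, c]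

noncomputable def Qconf : Fin 5 → EuclideanSpace ℝ (Fin 3) :=
  ![pt 1 0 0, pt (-1) 0 0, pt 0 1 0, pt 0 0 1, pt 0 0 (-1)]

/-! For unit vectors `|u - v|² = 2 - 2⟪u, v⟫`, so `|u - v| ≥ √2` exactly when `⟪u, v⟫ ≤ 0`.
The points of `Q` are pairwise non-acute, with `e₁ ⊥ e₂`, so `δ(Q) = √2`. Every unit vector
makes a non-obtuse angle with `e₁` or `-e₁`, so `η ≤ √2`, and `-e₂` is non-acute to all of `Q`,
so `η = √2`. -/

open scoped RealInnerProductSpace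

section ConfigurationBounds

variable {E : Type*} [MetricSpace E] {N : ℕ}

lemma sep_eq_of_forall_le {x : Fin N → E} {d : ℝ}
    (hle : ∀ i j, i ≠ j → d ≤ dist (x i) (x j)) {i j : Fin N} (hij : i ≠ j)
    (hd : dist (x i) (x j) = d) : sep x = d := by
  have : Nonempty {p : Fin N × Fin N // p.1 ≠ p.2} := ⟨⟨(i, j), hij⟩⟩
  refine le_antisymm ?_ (le_ciInf fun p => hle _ _ p.2)
  exact (ciInf_le (Finite.bddBelow_range _) ⟨(i, j), hij⟩).trans_eq hd

lemma mesh_eq_of_covers {S : Set E} {x : Fin N → E} {r : ℝ}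
    (hcover : ∀ y ∈ S, ∃ i, dist y (x i) ≤ r) {y : E} (hy : y ∈ S)
    (hfar : ∀ i, r ≤ dist y (x i)) : mesh S x = r := by
  have : Nonempty S := ⟨⟨y, hy⟩⟩
  have hinf_le : ∀ z : S, ⨅ i, dist (z : E) (x i) ≤ r := fun z =>
    let ⟨i, hi⟩ := hcover z z.2
    ciInf_le_of_le (Finite.bddBelow_range _) i hi
  refine le_antisymm (ciSup_le hinf_le) ?_
  have : Nonempty (Fin N) := ⟨(hcover y hy).choose⟩
  exact (le_ciInf hfar).trans (le_ciSup (f := fun z : S => ⨅ i, dist (z : E) (x i))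
    ⟨r, Set.forall_mem_range.2 hinf_le⟩ ⟨y, hy⟩)

end ConfigurationBounds

section UnitVectors

variable {F : Type*} [NormedAddCommGroup F] [InnerProductSpace ℝ F] {u v : F}

lemma dist_eq_sqrt_two_sub_inner_of_mem_sphere (hu : u ∈ sphere (0 : F) 1)
    (hv : v ∈ sphere (0 : F) 1) : dist u v = √(2 - 2 * ⟪u, v⟫) := by
  rw [mem_sphere_zero_iff_norm] at hu hv
  rw [dist_eq_norm, ← Real.sqrt_sq (norm_nonneg _), norm_sub_sq_real, hu, hv]
  ring_nf

lemma sqrt_two_le_dist_iff_inner_nonpos (hu : u ∈ sphere (0 : F) 1)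
    (hv : v ∈ sphere (0 : F) 1) : √2 ≤ dist u v ↔ ⟪u, v⟫ ≤ 0 := by
  have hle := real_inner_le_norm u v
  rw [mem_sphere_zero_iff_norm.1 hu, mem_sphere_zero_iff_norm.1 hv] at hle
  rw [dist_eq_sqrt_two_sub_inner_of_mem_sphere hu hv, Real.sqrt_le_sqrt_iff (by linarith)]
  constructor <;> intro h <;> linarith

lemma dist_le_sqrt_two_of_inner_nonneg (hu : u ∈ sphere (0 : F) 1)
    (hv : v ∈ sphere (0 : F) 1) (h : 0 ≤ ⟪u, v⟫) : dist u v ≤ √2 := by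
  rw [dist_eq_sqrt_two_sub_inner_of_mem_sphere hu hv]
  exact Real.sqrt_le_sqrt (by linarith)

end UnitVectors

lemma inner_pt (y : EuclideanSpace ℝ (Fin 3)) (a b c : ℝ) :
    ⟪y, pt a b c⟫ = y 0 * a + y 1 * b + y 2 * c := by
  simp [pt, PiLp.inner_apply, Fin.sum_univ_three, mul_comm]

lemma inner_pt_pt (a b c d e f : ℝ) : ⟪pt a b c, pt d e f⟫ = a * d + b * e + c * f := by
  rw [inner_pt]
  simp [pt]

lemma pt_mem_sphere {a b c : ℝ} (h : a ^ 2 + b ^ 2 + c ^ 2 = 1) :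
    pt a b c ∈ sphere (0 : EuclideanSpace ℝ (Fin 3)) 1 := by
  rw [mem_sphere_zero_iff_norm, norm_eq_sqrt_real_inner, inner_pt_pt, ← sq, ← sq, ← sq, h,
    Real.sqrt_one]

lemma Qconf_mem_sphere (i : Fin 5) : Qconf i ∈ sphere (0 : EuclideanSpace ℝ (Fin 3)) 1 := by
  fin_cases i <;> exact pt_mem_sphere (by norm_num)

lemma inner_Qconf_nonpos {i j : Fin 5} (hij : i ≠ j) : ⟪Qconf i, Qconf j⟫ ≤ 0 := by
  fin_cases i <;> fin_cases j <;> simp_all [Qconf, inner_pt_pt]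

lemma sep_Qconf : sep Qconf = √2 := by
  refine sep_eq_of_forall_le (fun i j hij => (sqrt_two_le_dist_iff_inner_nonpos
    (Qconf_mem_sphere i) (Qconf_mem_sphere j)).2 (inner_Qconf_nonpos hij))
    (i := 0) (j := 2) (by decide) ?_
  rw [dist_eq_sqrt_two_sub_inner_of_mem_sphere (Qconf_mem_sphere 0) (Qconf_mem_sphere 2)]
  simp [Qconf, inner_pt_pt]

lemma mesh_Qconf : mesh (sphere (0 : EuclideanSpace ℝ (Fin 3)) 1) Qconf = √2 := by
  have hfar : pt 0 (-1) 0 ∈ sphere (0 : EuclideanSpace ℝ (Fin 3)) 1 := pt_mem_sphere (by norm_num)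
  refine mesh_eq_of_covers (fun y hy => ?_) hfar fun i => ?_
  · rcases le_total 0 (y 0) with h | h
    · exact ⟨0, dist_le_sqrt_two_of_inner_nonneg hy (Qconf_mem_sphere 0)
        (by simpa [Qconf, inner_pt] using h)⟩
    · exact ⟨1, dist_le_sqrt_two_of_inner_nonneg hy (Qconf_mem_sphere 1)
        (by simpa [Qconf, inner_pt] using h)⟩
  · refine (sqrt_two_le_dist_iff_inner_nonpos hfar (Qconf_mem_sphere i)).2 ?_
    fin_cases i <;> simp [Qconf, inner_pt_pt]

theorem stmt_11 :
    (∀ i, Qconf i ∈ Metric.sphere (0 : EuclideanSpace ℝ (Fin 3)) 1) ∧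
    sep Qconf = Real.sqrt 2 ∧
    mesh (Metric.sphere (0 : EuclideanSpace ℝ (Fin 3)) 1) Qconf = Real.sqrt 2 ∧
    mesh (Metric.sphere (0 : EuclideanSpace ℝ (Fin 3)) 1) Qconf / sep Qconf = 1 := by
  refine ⟨Qconf_mem_sphere, sep_Qconf, mesh_Qconf, ?_⟩
  rw [sep_Qconf, mesh_Qconf, div_self (by positivity)]
end

section
/- limsup_{s→∞} 2^{s/2} E_s(S², 5) ≤ 8, where E_s(S², 5) is the minimal 5-point Riesz s-energy of the unit sphere S². -/
open scoped BigOperators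
open Filter Metric

open Topology

/-!
The minimal energy is at most the energy of a square pyramid: four points forming a square on
the circle at height `-t`, plus the pole `(0, 1, 0)`. With `r² = 1 - t²` its squared distances are
`2r²` (square edges, 8 ordered pairs), `4r²` (square diagonals, 4) and `2(1 + t)` (to the pole,
8), so `2^{s/2} E_s = 8 (1 - t²)^{-s/2} + 4 · 2^{-s/2} (1 - t²)^{-s/2} + 8 (1 + t)^{-s/2}`. Taking
`t = s^{-2/3}` gives `s t² → 0` and `s t → ∞`, and Bernoulli's inequality turns these into
`(1 - t²)^{-s/2} → 1` and `(1 + t)^{-s/2} → 0`, so the bound tends to `8`.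
-/

lemma dist_rpow_neg_eq_sq_rpow {E : Type*} [MetricSpace E] (x y : E) (s : ℝ) :
    dist x y ^ (-s) = (dist x y ^ 2) ^ (-(s / 2)) := by
  rw [← Real.rpow_natCast, ← Real.rpow_mul dist_nonneg]
  ring_nf

lemma energy_nonneg {E : Type*} [MetricSpace E] {N : ℕ} (s : ℝ) (x : Fin N → E) :
    0 ≤ energy s x :=
  Finset.sum_nonneg fun _ _ => Finset.sum_nonneg fun _ _ => Real.rpow_nonneg dist_nonneg _

lemma minEnergy_nonneg {E : Type*} [MetricSpace E] (S : Set E) (N : ℕ) (s : ℝ) :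
    0 ≤ minEnergy S N s :=
  Real.iInf_nonneg fun x => energy_nonneg s x.1

lemma minEnergy_le_energy_s13 {E : Type*} [MetricSpace E] {S : Set E} {N : ℕ} {x : Fin N → E}
    (hx : Function.Injective x) (hxS : ∀ i, x i ∈ S) (s : ℝ) : minEnergy S N s ≤ energy s x := by
  refine ciInf_le ⟨0, ?_⟩
    (⟨x, hx, hxS⟩ : {x : Fin N → E // Function.Injective x ∧ ∀ i, x i ∈ S})
  rintro _ ⟨y, rfl⟩
  exact energy_nonneg s y.1

section Bernoulli

variable {α : Type*} {l : Filter α} {u p : α → ℝ}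

theorem tendsto_one_sub_rpow_neg_of_tendsto_mul (hu : ∀ᶠ a in l, 0 ≤ u a)
    (hp : ∀ᶠ a in l, 1 ≤ p a) (hpu : Tendsto (fun a => p a * u a) l (𝓝 0)) :
    Tendsto (fun a => (1 - u a) ^ (-p a)) l (𝓝 1) := by
  have hlim : Tendsto (fun a => (1 - p a * u a)⁻¹) l (𝓝 1) := by
    simpa using (tendsto_const_nhds.sub hpu).inv₀ (by norm_num : (1 : ℝ) - 0 ≠ 0)
  refine tendsto_of_tendsto_of_tendsto_of_le_of_le' tendsto_const_nhds hlim ?_ ?_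
  all_goals
    filter_upwards [hu, hp, hpu.eventually (gt_mem_nhds one_pos)] with a hu hp hpu
    have hu1 : u a < 1 := by nlinarith
  · exact Real.one_le_rpow_of_pos_of_le_one_of_nonpos (by linarith) (by linarith) (by linarith)
  · rw [Real.rpow_neg (by linarith)]
    refine inv_anti₀ (by linarith) ?_
    simpa [sub_eq_add_neg] using one_add_mul_self_le_rpow_one_add (by linarith : -1 ≤ -u a) hp

theorem tendsto_one_add_rpow_neg_of_tendsto_mul (hu : ∀ᶠ a in l, 0 ≤ u a)
    (hp : ∀ᶠ a in l, 1 ≤ p a) (hpu : Tendsto (fun a => p a * u a) l atTop) :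
    Tendsto (fun a => (1 + u a) ^ (-p a)) l (𝓝 0) := by
  have hlim : Tendsto (fun a => (1 + p a * u a)⁻¹) l (𝓝 0) :=
    tendsto_inv_atTop_zero.comp (tendsto_atTop_add_const_left _ 1 hpu)
  refine tendsto_of_tendsto_of_tendsto_of_le_of_le' tendsto_const_nhds hlim ?_ ?_
  all_goals filter_upwards [hu, hp] with a hu hp
  · positivity
  · rw [Real.rpow_neg (by linarith)]
    exact inv_anti₀ (by positivity) (one_add_mul_self_le_rpow_one_add (by linarith) hp)

end Bernoulli

/-- The configuration `Q_t` of the paper. -/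
noncomputable def squarePyramid (t : ℝ) : Fin 5 → EuclideanSpace ℝ (Fin 3) :=
  ![!₂[√(1 - t ^ 2), -t, 0], !₂[-√(1 - t ^ 2), -t, 0], !₂[0, -t, √(1 - t ^ 2)],
    !₂[0, -t, -√(1 - t ^ 2)], !₂[0, 1, 0]]

def squarePyramidDistSq (t : ℝ) : Matrix (Fin 5) (Fin 5) ℝ :=
  let a := 2 * (1 - t ^ 2)
  let b := 4 * (1 - t ^ 2)
  let c := 2 * (1 + t)
  !![0, b, a, a, c; b, 0, a, a, c; a, a, 0, b, c; a, a, b, 0, c; c, c, c, c, 0]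

lemma dist_squarePyramid_sq {t : ℝ} (ht : t ^ 2 ≤ 1) (i j : Fin 5) :
    dist (squarePyramid t i) (squarePyramid t j) ^ 2 = squarePyramidDistSq t i j := by
  have hr : √(1 - t ^ 2) ^ 2 = 1 - t ^ 2 := Real.sq_sqrt (by linarith)
  rw [EuclideanSpace.dist_eq, Real.sq_sqrt (by positivity)]
  fin_cases i <;> fin_cases j <;>
    simp [squarePyramid, squarePyramidDistSq, Fin.sum_univ_three, Real.dist_eq, sq_abs] <;>
    linarith

lemma squarePyramid_injective {t : ℝ} (ht : t ^ 2 < 1) :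
    Function.Injective (squarePyramid t) := by
  intro i j hij
  have h := dist_squarePyramid_sq ht.le i j
  rw [hij, dist_self] at h
  fin_cases i <;> fin_cases j <;> simp [squarePyramidDistSq] at h ⊢ <;> nlinarith

lemma squarePyramid_mem_sphere {t : ℝ} (ht : t ^ 2 ≤ 1) (i : Fin 5) :
    squarePyramid t i ∈ sphere (0 : EuclideanSpace ℝ (Fin 3)) 1 := by
  have hr : √(1 - t ^ 2) ^ 2 = 1 - t ^ 2 := Real.sq_sqrt (by linarith)
  rw [mem_sphere_zero_iff_norm, EuclideanSpace.norm_eq, Real.sqrt_eq_one]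
  fin_cases i <;> simp [squarePyramid, Fin.sum_univ_three] <;> linarith

lemma energy_squarePyramid {t : ℝ} (ht : t ^ 2 ≤ 1) (s : ℝ) :
    energy s (squarePyramid t) = 8 * (2 * (1 - t ^ 2)) ^ (-(s / 2))
      + 4 * (4 * (1 - t ^ 2)) ^ (-(s / 2)) + 8 * (2 * (1 + t)) ^ (-(s / 2)) := by
  simp only [energy, dist_rpow_neg_eq_sq_rpow, dist_squarePyramid_sq ht]
  simp [Fin.sum_univ_five, Finset.sum_filter, squarePyramidDistSq]
  ring

lemma two_rpow_mul_energy_squarePyramid {t : ℝ} (ht : t ^ 2 ≤ 1) (s : ℝ) :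
    2 ^ (s / 2) * energy s (squarePyramid t) = 8 * (1 - t ^ 2) ^ (-(s / 2))
      + 4 * 2 ^ (-(s / 2)) * (1 - t ^ 2) ^ (-(s / 2)) + 8 * (1 + t) ^ (-(s / 2)) := by
  have hsq : 0 ≤ 1 - t ^ 2 := by linarith
  have hplus : 0 ≤ 1 + t := by nlinarith
  have htwo : (2 : ℝ) ^ (s / 2) * 2 ^ (-(s / 2)) = 1 := by
    rw [← Real.rpow_add two_pos, add_neg_cancel, Real.rpow_zero]
  rw [energy_squarePyramid ht, show (4 : ℝ) * (1 - t ^ 2) = 2 * (2 * (1 - t ^ 2)) by ring,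
    Real.mul_rpow zero_le_two (by positivity : (0 : ℝ) ≤ 2 * (1 - t ^ 2)),
    Real.mul_rpow zero_le_two hsq, Real.mul_rpow zero_le_two hplus]
  linear_combination (8 * (1 - t ^ 2) ^ (-(s / 2)) + 4 * 2 ^ (-(s / 2)) * (1 - t ^ 2) ^ (-(s / 2))
      + 8 * (1 + t) ^ (-(s / 2))) * htwo

lemma rpow_neg_two_thirds_sq_lt_one {s : ℝ} (hs : 1 < s) : (s ^ (-(2 / 3) : ℝ)) ^ 2 < 1 :=
  pow_lt_one₀ (by positivity) (Real.rpow_lt_one_of_one_lt_of_neg hs (by norm_num)) two_ne_zero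

theorem tendsto_two_rpow_mul_energy_squarePyramid :
    Tendsto (fun s : ℝ => 2 ^ (s / 2) * energy s (squarePyramid (s ^ (-(2 / 3) : ℝ))))
      atTop (𝓝 8) := by
  have hu : ∀ᶠ s : ℝ in atTop, 0 ≤ s ^ (-(2 / 3) : ℝ) :=
    eventually_ge_atTop 0 |>.mono fun s hs => Real.rpow_nonneg hs _
  have hp : ∀ᶠ s : ℝ in atTop, 1 ≤ s / 2 :=
    eventually_ge_atTop 2 |>.mono fun s hs => by linarith
  have hmul : (fun s : ℝ => s ^ (1 / 3 : ℝ) / 2) =ᶠ[atTop]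
      fun s => s / 2 * s ^ (-(2 / 3) : ℝ) := by
    filter_upwards [eventually_gt_atTop 0] with s hs
    rw [div_mul_eq_mul_div, ← Real.rpow_one_add' hs.le (by norm_num)]
    norm_num
  have hmul_sq : (fun s : ℝ => s ^ (-(1 / 3) : ℝ) / 2) =ᶠ[atTop]
      fun s => s / 2 * (s ^ (-(2 / 3) : ℝ)) ^ 2 := by
    filter_upwards [eventually_gt_atTop 0] with s hs
    rw [← Real.rpow_natCast, ← Real.rpow_mul hs.le, div_mul_eq_mul_div,
      ← Real.rpow_one_add' hs.le (by norm_num)]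
    norm_num
  have hA : Tendsto (fun s : ℝ => (1 - (s ^ (-(2 / 3) : ℝ)) ^ 2) ^ (-(s / 2))) atTop (𝓝 1) := by
    refine tendsto_one_sub_rpow_neg_of_tendsto_mul (hu.mono fun s _ => sq_nonneg _) hp ?_
    simpa using ((tendsto_rpow_neg_atTop (by norm_num)).div_const 2).congr' hmul_sq
  have hB : Tendsto (fun s : ℝ => (1 + s ^ (-(2 / 3) : ℝ)) ^ (-(s / 2))) atTop (𝓝 0) :=
    tendsto_one_add_rpow_neg_of_tendsto_mul hu hp
      (((tendsto_rpow_atTop (by norm_num)).atTop_div_const two_pos).congr' hmul)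
  have hC : Tendsto (fun s : ℝ => (2 : ℝ) ^ (-(s / 2))) atTop (𝓝 0) :=
    (tendsto_rpow_atBot_of_base_gt_one 2 one_lt_two).comp
      (tendsto_neg_atTop_atBot.comp (tendsto_id.atTop_div_const two_pos))
  have hlim := ((hA.const_mul 8).add ((hC.const_mul 4).mul hA)).add (hB.const_mul 8)
  norm_num at hlim
  refine hlim.congr' ?_
  filter_upwards [eventually_gt_atTop 1] with s hs
  rw [two_rpow_mul_energy_squarePyramid (rpow_neg_two_thirds_sq_lt_one hs).le]

theorem stmt_13 :
    Filter.limsup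
      (fun s : ℝ => (2 : ℝ) ^ (s / 2) *
        minEnergy (Metric.sphere (0 : EuclideanSpace ℝ (Fin 3)) 1) 5 s)
      Filter.atTop ≤ 8 := by
  have hQ := tendsto_two_rpow_mul_energy_squarePyramid
  refine (limsup_le_limsup ?_ ?_ hQ.isBoundedUnder_le).trans hQ.limsup_eq.le
  · filter_upwards [eventually_gt_atTop 1] with s hs
    have ht := rpow_neg_two_thirds_sq_lt_one hs
    exact mul_le_mul_of_nonneg_left
      (minEnergy_le_energy_s13 (squarePyramid_injective ht) (squarePyramid_mem_sphere ht.le) s)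
      (by positivity)
  · exact isCoboundedUnder_le_of_le atTop fun s =>
      mul_nonneg (by positivity) (minEnergy_nonneg _ _ _)
end
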